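/- arXiv:1910.11839 — 4 statements merged into one kernel-verified Lean document; each statement's English description precedes it below -/
import Mathlib

section
/- Let θ ∈ ℝ, let w ∈ ℂ with |w| = 1, and let n be a nonzero integer. If g ∈ L²(𝕋, m) satisfies g(e^{iθ}·z)·w·zⁿ = g(z) for m-almost every z ∈ 𝕋, then g = 0 m-almost everywhere. (This is the key step showing that for f(z) = z₀·z the cohomological equation of the Anzai skew-product has no nonzero square-integrable solutions, for any deformation parameter.) -/
/-!
Transport `g` to `AddCircle (2π)` along `toCircle`, which carries Haar measure to Haar measure.
There the relation says that multiplying by `w zⁿ` and rotating by `θ` fixes `g`, so on Fourier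
coefficients `ĝ(k) = w · e_{k-n}(θ) · ĝ(k - n)`: the sequence `|ĝ(k)|` is `n`-periodic. A periodic
square-summable sequence with nonzero period vanishes, and by Parseval so does `g`.
-/

open MeasureTheory Filter

noncomputable instance : MeasurableSpace Circle := borel Circle
instance : BorelSpace Circle := ⟨rfl⟩

/-- The normalized Haar (Lebesgue) probability measure `m` on the unit circle `𝕋`. -/
noncomputable def haarCircle : Measure Circle := Measure.haarMeasure ⊤

open Function Topology AddCircle

theorem Function.Periodic.eq_zero_of_summable {E : Type*} [AddCommGroup E] [TopologicalSpace E]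
    [IsTopologicalAddGroup E] [T2Space E] {f : ℤ → E} {n : ℤ} (hf : Periodic f n) (hn : n ≠ 0)
    (hs : Summable f) : f = 0 := by
  funext k
  have hinj : Injective fun j : ℕ => k + j • n := fun i j h => by simpa [hn] using h
  have hlim : Tendsto (fun j : ℕ => f (k + j • n)) atTop (𝓝 0) := by
    rw [← Nat.cofinite_eq_atTop]
    exact hs.tendsto_cofinite_zero.comp hinj.tendsto_cofinite
  have hconst : (fun j : ℕ => f (k + j • n)) = fun _ => f k := funext fun j => hf.nsmul j k
  rw [hconst] at hlim
  exact tendsto_nhds_unique tendsto_const_nhds hlim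

theorem fourier_apply_add {T : ℝ} (m : ℤ) (x y : AddCircle T) :
    fourier m (x + y) = fourier m x * fourier m y := by
  simp only [fourier_apply, smul_add, toCircle_add, Circle.coe_mul]

section Fourier

variable {T : ℝ} [Fact (0 < T)] {E : Type*} [NormedAddCommGroup E] [NormedSpace ℂ E]

theorem fourierCoeff_comp_add_left (f : AddCircle T → E) (a : AddCircle T) (k : ℤ) :
    fourierCoeff (fun x => f (a + x)) k = fourier k a • fourierCoeff f k := by
  have hshift (x : AddCircle T) :
      fourier (-k) x • f (a + x) = fourier k a • fourier (-k) (a + x) • f (a + x) := by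
    rw [fourier_apply_add, smul_smul, ← mul_assoc, ← fourier_add, add_neg_cancel, fourier_zero,
      one_mul]
  simp only [fourierCoeff, hshift, integral_smul]
  congr 1
  exact integral_add_left_eq_self (fun y => fourier (-k) y • f y) a

theorem fourierCoeff_fourier_smul (f : AddCircle T → E) (m k : ℤ) :
    fourierCoeff (fun x => fourier m x • f x) k = fourierCoeff f (k - m) := by
  have hmul (x : AddCircle T) : fourier (-k) x * fourier m x = fourier (-(k - m)) x := by
    rw [← fourier_add, neg_sub, neg_add_eq_sub]
  simp only [fourierCoeff, smul_smul, hmul]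

theorem MeasureTheory.MemLp.fourierCoeff_toLp {f : AddCircle T → ℂ}
    (hf : MemLp f 2 AddCircle.haarAddCircle) : fourierCoeff (hf.toLp f) = fourierCoeff f :=
  fourierCoeff_congr_ae hf.coeFn_toLp

theorem MeasureTheory.MemLp.summable_sq_fourierCoeff {f : AddCircle T → ℂ}
    (hf : MemLp f 2 AddCircle.haarAddCircle) : Summable fun k => ‖fourierCoeff f k‖ ^ 2 := by
  simpa only [hf.fourierCoeff_toLp] using (hasSum_sq_fourierCoeff (hf.toLp f)).summable

theorem MeasureTheory.MemLp.ae_eq_zero_of_fourierCoeff_eq_zero {f : AddCircle T → ℂ}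
    (hf : MemLp f 2 AddCircle.haarAddCircle) (h : fourierCoeff f = 0) :
    f =ᵐ[AddCircle.haarAddCircle] 0 := by
  have hrepr : fourierBasis.repr (hf.toLp f) = 0 := by
    ext k
    rw [fourierBasis_repr, hf.fourierCoeff_toLp, h]
    rfl
  have hzero : hf.toLp f = 0 := fourierBasis.repr.map_eq_zero_iff.1 hrepr
  filter_upwards [hf.coeFn_toLp, Lp.coeFn_zero ℂ 2 AddCircle.haarAddCircle] with x hx hx0
  rw [← hx, hzero, hx0]

theorem AddCircle.ae_eq_zero_of_comp_add_mul_fourier {G : AddCircle T → ℂ}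
    (hG : MemLp G 2 haarAddCircle) (a : AddCircle T) {w : ℂ} (hw : ‖w‖ = 1) {n : ℤ}
    (hn : n ≠ 0) (h : ∀ᵐ x ∂haarAddCircle, G (a + x) * w * fourier n x = G x) :
    G =ᵐ[haarAddCircle] 0 := by
  have hG' : G =ᵐ[haarAddCircle] w • fun x => fourier n x • G (a + x) := by
    filter_upwards [h] with x hx
    rw [← hx, Pi.smul_apply, smul_eq_mul, smul_eq_mul]
    ring
  have hrec (k : ℤ) :
      fourierCoeff G k = w * (fourier (k - n) a * fourierCoeff G (k - n)) := by
    rw [congr_fun (fourierCoeff_congr_ae hG') k, fourierCoeff.const_smul,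
      fourierCoeff_fourier_smul, fourierCoeff_comp_add_left, smul_eq_mul, smul_eq_mul]
  have hper : Periodic (fun k => ‖fourierCoeff G k‖ ^ 2) n := fun k => by
    simp only [hrec (k + n), add_sub_cancel_right, norm_mul, hw, fourier_apply, Circle.norm_coe,
      one_mul]
  have hcoeff : fourierCoeff G = 0 := by
    funext k
    simpa using congr_fun (hper.eq_zero_of_summable hn hG.summable_sq_fourierCoeff) k
  exact hG.ae_eq_zero_of_fourierCoeff_eq_zero hcoeff

end Fourier

instance : haarCircle.IsHaarMeasure := Measure.isHaarMeasure_haarMeasure ⊤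

instance : IsProbabilityMeasure haarCircle := ⟨Measure.haarMeasure_self⟩

namespace AddCircle

variable {T : ℝ}

theorem measurableEmbedding_toCircle (hT : T ≠ 0) :
    MeasurableEmbedding (toCircle : AddCircle T → Circle) := by
  rw [← funext (homeomorphCircle_apply hT)]
  exact (homeomorphCircle hT).measurableEmbedding

theorem measurePreserving_toCircle [hT : Fact (0 < T)] :
    MeasurePreserving toCircle (haarAddCircle (T := T)) haarCircle := by
  have hmeas : Measurable (toCircle : AddCircle T → Circle) := continuous_toCircle.measurable
  refine ⟨hmeas, ?_⟩
  set μ := Measure.map toCircle (haarAddCircle (T := T))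
  have : μ.IsMulLeftInvariant := ⟨fun c => by
    obtain ⟨b, rfl⟩ := (homeomorphCircle hT.out.ne').surjective c
    rw [homeomorphCircle_apply, Measure.map_map (measurable_const_mul _) hmeas]
    have hcomm : (toCircle b * ·) ∘ toCircle = toCircle ∘ (b + ·) :=
      funext fun x => (toCircle_add b x).symm
    rw [hcomm, ← Measure.map_map hmeas (measurable_const_add b),
      (measurePreserving_add_left haarAddCircle b).map_eq]⟩
  have : IsProbabilityMeasure μ := Measure.isProbabilityMeasure_map hmeas.aemeasurable
  have : μ.IsHaarMeasure := Measure.isHaarMeasure_of_isCompact_nonempty_interior μ Set.univ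
    isCompact_univ (by simp) (by simp) (by simp)
  exact Measure.isHaarMeasure_eq_of_isProbabilityMeasure μ haarCircle

end AddCircle

/-- For `f(z) = z₀ z` the cohomological equation of the Anzai skew-product has no nonzero
square-integrable solutions: if `g ∈ L²(𝕋, m)` satisfies `g(e^{iθ}z)·w·zⁿ = g(z)` a.e. for some
unimodular `w` and nonzero integer `n`, then `g = 0` a.e. -/
theorem stmt1 (θ : ℝ) (w : ℂ) (hw : ‖w‖ = 1) (n : ℤ) (hn : n ≠ 0)
    (g : Circle → ℂ) (hg : MemLp g 2 haarCircle)
    (hcoh : ∀ᵐ z ∂haarCircle, g (Circle.exp θ * z) * w * (z : ℂ) ^ n = g z) :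
    g =ᵐ[haarCircle] 0 := by
  have : Fact (0 < 2 * Real.pi) := ⟨Real.two_pi_pos⟩
  have hmp := measurePreserving_toCircle (T := 2 * Real.pi)
  have hemb := measurableEmbedding_toCircle Real.two_pi_pos.ne'
  rw [← hmp.map_eq, hemb.ae_map_iff] at hcoh
  rw [EventuallyEq, ← hmp.map_eq, hemb.ae_map_iff]
  refine ae_eq_zero_of_comp_add_mul_fourier (hg.comp_measurePreserving hmp) θ hw hn ?_
  filter_upwards [hcoh] with x hx
  rwa [toCircle_add, toCircle_apply_mk, div_self Real.two_pi_pos.ne', one_mul, fourier_apply,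
    toCircle_zsmul, Circle.coe_zpow]
end

section
/- Let X₀ be a nonempty compact Hausdorff space, let T₀ : X₀ → X₀ be a homeomorphism such that (X₀, T₀) is uniquely ergodic with unique invariant measure μ₀, let f : X₀ → 𝕋 be continuous, let T be the associated skew product on X₀ × 𝕋, and let μ = μ₀ × m. If T is ergodic with respect to μ, then T is uniquely ergodic: μ is the only T-invariant Radon probability measure on X₀ × 𝕋. -/
/-!
The first marginal of an invariant measure `ν` is `T₀`-invariant, hence equal to `μ₀`, so
averaging `ν` over all rotations `(x, z) ↦ (x, z w)` of the fibre gives `μ₀ × m`. Rotations commute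
with the skew product, so the partial average over `w ∈ E` is a `T`-invariant measure dominated
by `μ₀ × m`; by ergodicity it equals `m(E) • (μ₀ × m)`. Hence, for continuous `g`, the continuous
function `w ↦ ∫ g(x, z w) dν` has the same integral over every `E` as the constant `∫ g d(μ₀ × m)`,
so it is that constant. Thus `ν` is invariant under every fibre rotation and equals its own
rotation average `μ₀ × m`.
-/

open MeasureTheory Filter

open Function Set

instance inst_s5 : haarCircle.IsHaarMeasure := Measure.isHaarMeasure_haarMeasure _

instance inst_s5_2 : IsProbabilityMeasure haarCircle :=
  ⟨Measure.haarMeasure_self (K₀ := ⊤)⟩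

theorem MeasureTheory.Measure.Regular.map_of_continuous {α β : Type*} [TopologicalSpace α]
    [MeasurableSpace α] [BorelSpace α] [TopologicalSpace β] [MeasurableSpace β] [BorelSpace β]
    [R1Space β] {μ : Measure α} [μ.Regular] [IsFiniteMeasure μ] {f : α → β}
    (hf : Continuous f) : (μ.map f).Regular :=
  have := Measure.InnerRegularCompactLTTop.map_of_continuous (μ := μ) hf
  inferInstance

section SkewProduct

variable {X G : Type*} [Group G]

def skewProduct (T₀ : X → X) (f : X → G) (p : X × G) : X × G := (T₀ p.1, f p.1 * p.2)

def rotateFiber (w : G) (p : X × G) : X × G := (p.1, p.2 * w)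

theorem skewProduct_rotateFiber (T₀ : X → X) (f : X → G) (w : G) (p : X × G) :
    skewProduct T₀ f (rotateFiber w p) = rotateFiber w (skewProduct T₀ f p) := by
  simp [skewProduct, rotateFiber, mul_assoc]

variable [MeasurableSpace X] [MeasurableSpace G]

theorem map_map_fst_eq_of_map_skewProduct_eq {T₀ : X → X} {f : X → G} {ν : Measure (X × G)}
    (hT₀ : Measurable T₀) (hS : Measurable (skewProduct T₀ f))
    (hν : ν.map (skewProduct T₀ f) = ν) : (ν.map Prod.fst).map T₀ = ν.map Prod.fst := by
  rw [Measure.map_map hT₀ measurable_fst]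
  conv_rhs => rw [← hν, Measure.map_map measurable_fst hS]
  rfl

variable [MeasurableMul₂ G]

theorem measurable_uncurry_rotateFiber : Measurable (uncurry (rotateFiber (X := X) (G := G))) :=
  measurable_snd.fst.prodMk (measurable_snd.snd.mul measurable_fst)

theorem measurable_rotateFiber (w : G) : Measurable (rotateFiber (X := X) w) :=
  measurable_uncurry_rotateFiber.comp measurable_prodMk_left

noncomputable def fiberAverage (m : Measure G) (ν : Measure (X × G)) : Measure (X × G) :=
  (m.prod ν).map (uncurry rotateFiber)

variable {m : Measure G} {ν : Measure (X × G)}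

instance [IsFiniteMeasure m] [IsFiniteMeasure ν] : IsFiniteMeasure (fiberAverage m ν) := by
  unfold fiberAverage; infer_instance

theorem fiberAverage_apply [SFinite ν] {A : Set (X × G)} (hA : MeasurableSet A) :
    fiberAverage m ν A = ∫⁻ w, ν (rotateFiber w ⁻¹' A) ∂m := by
  rw [fiberAverage, Measure.map_apply measurable_uncurry_rotateFiber hA,
    Measure.prod_apply (measurable_uncurry_rotateFiber hA)]
  rfl

theorem fiberAverage_univ [SFinite ν] : fiberAverage m ν univ = m univ * ν univ := by
  simp [fiberAverage_apply MeasurableSet.univ, mul_comm]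

theorem fiberAverage_mono_left [SFinite ν] {m' : Measure G} (h : m' ≤ m) :
    fiberAverage m' ν ≤ fiberAverage m ν :=
  Measure.le_iff.2 fun A hA => by
    simpa only [fiberAverage_apply hA] using lintegral_mono' h le_rfl

theorem fiberAverage_eq_prod [SFinite m] [SFinite ν] [m.IsMulLeftInvariant] :
    fiberAverage m ν = (ν.map Prod.fst).prod m := by
  ext A hA
  rw [fiberAverage, Measure.map_apply measurable_uncurry_rotateFiber hA,
    Measure.prod_apply_symm (measurable_uncurry_rotateFiber hA), Measure.prod_apply hA,
    lintegral_map (measurable_measure_prodMk_left hA) measurable_fst]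
  exact lintegral_congr fun p => measure_preimage_mul m p.2 (Prod.mk p.1 ⁻¹' A)

theorem fiberAverage_eq_self [IsProbabilityMeasure m] [SFinite ν]
    (hν : ∀ w, ν.map (rotateFiber w) = ν) : fiberAverage m ν = ν := by
  ext A hA
  simp_rw [fiberAverage_apply hA, ← Measure.map_apply (measurable_rotateFiber _) hA, hν,
    lintegral_const, measure_univ, mul_one]

theorem map_skewProduct_fiberAverage [SFinite ν] {T₀ : X → X} {f : X → G}
    (hS : Measurable (skewProduct T₀ f)) (hν : ν.map (skewProduct T₀ f) = ν) :
    (fiberAverage m ν).map (skewProduct T₀ f) = fiberAverage m ν := by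
  ext A hA
  rw [Measure.map_apply hS hA, fiberAverage_apply (hS hA), fiberAverage_apply hA]
  refine lintegral_congr fun w => ?_
  have hcomm : rotateFiber w ⁻¹' (skewProduct T₀ f ⁻¹' A) =
      skewProduct T₀ f ⁻¹' (rotateFiber w ⁻¹' A) := by
    ext p; simp only [mem_preimage, skewProduct_rotateFiber]
  rw [hcomm, ← Measure.map_apply hS (measurable_rotateFiber w hA), hν]

theorem fiberAverage_restrict_eq_smul [IsProbabilityMeasure m] [IsProbabilityMeasure ν]
    {T₀ : X → X} {f : X → G} (herg : Ergodic (skewProduct T₀ f) (fiberAverage m ν))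
    (hν : ν.map (skewProduct T₀ f) = ν) (E : Set G) :
    fiberAverage (m.restrict E) ν = m E • fiberAverage m ν := by
  obtain ⟨c, hc⟩ := herg.eq_smul_of_absolutelyContinuous
    ⟨herg.measurable, map_skewProduct_fiberAverage herg.measurable hν⟩
    (Measure.absolutelyContinuous_of_le <|
      fiberAverage_mono_left (Measure.restrict_le_self (s := E)))
  have hmass := congrArg (· univ) hc
  simp only [Measure.smul_apply, fiberAverage_univ, measure_univ, mul_one,
    Measure.restrict_apply_univ, smul_eq_mul] at hmass
  rwa [hmass]

end SkewProduct

section Topological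

variable {X G : Type*} [TopologicalSpace X] [Group G] [TopologicalSpace G] [ContinuousMul G]

theorem continuous_uncurry_rotateFiber : Continuous (uncurry (rotateFiber (X := X) (G := G))) :=
  continuous_snd.fst.prodMk (continuous_snd.snd.mul continuous_fst)

theorem continuous_rotateFiber (w : G) : Continuous (rotateFiber (X := X) w) :=
  continuous_uncurry_rotateFiber.comp (continuous_const.prodMk continuous_id)

variable [CompactSpace X] [MeasurableSpace X] [BorelSpace X] [CompactSpace G]
  [T2Space G] [SecondCountableTopology G] [MeasurableSpace G] [BorelSpace G]
  {m : Measure G} {ν : Measure (X × G)} {g : X × G → ℝ}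

theorem continuous_integral_comp_rotateFiber [IsFiniteMeasure ν] (hg : Continuous g) :
    Continuous fun w => ∫ p, g (rotateFiber w p) ∂ν := by
  simpa only [Measure.restrict_univ] using continuous_parametric_integral_of_continuous
    (μ := ν) (f := fun w p => g (rotateFiber w p)) (hg.comp continuous_uncurry_rotateFiber)
    isCompact_univ

theorem integral_fiberAverage [IsFiniteMeasure m] [IsFiniteMeasure ν] (hg : Continuous g) :
    ∫ q, g q ∂(fiberAverage m ν) = ∫ w, ∫ p, g (rotateFiber w p) ∂ν ∂m := by
  rw [fiberAverage, integral_map continuous_uncurry_rotateFiber.aemeasurable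
    hg.aestronglyMeasurable]
  exact integral_prod _ ((hg.comp continuous_uncurry_rotateFiber).integrable_of_hasCompactSupport
    (HasCompactSupport.of_compactSpace _))

theorem integral_comp_rotateFiber_eq_integral_fiberAverage [IsProbabilityMeasure m]
    [m.IsOpenPosMeasure] [IsProbabilityMeasure ν] {T₀ : X → X} {f : X → G}
    (herg : Ergodic (skewProduct T₀ f) (fiberAverage m ν)) (hν : ν.map (skewProduct T₀ f) = ν)
    (hg : Continuous g) (w : G) :
    ∫ p, g (rotateFiber w p) ∂ν = ∫ q, g q ∂(fiberAverage m ν) := by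
  set c := ∫ q, g q ∂(fiberAverage m ν)
  have hφ := continuous_integral_comp_rotateFiber (ν := ν) hg
  have hset : ∀ E, MeasurableSet E → m E < ⊤ →
      ∫ w in E, ∫ p, g (rotateFiber w p) ∂ν ∂m = ∫ _ in E, c ∂m := fun E _ _ => by
    rw [← integral_fiberAverage hg, fiberAverage_restrict_eq_smul herg hν, integral_smul_measure,
      setIntegral_const]
    rfl
  have hae := ae_eq_of_forall_setIntegral_eq_of_sigmaFinite
    (fun _ _ _ => (hφ.integrable_of_hasCompactSupport (.of_compactSpace _)).integrableOn)
    (fun _ _ _ => integrableOn_const) hset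
  exact congrFun ((hφ.ae_eq_iff_eq m continuous_const).1 hae) w

theorem map_rotateFiber_eq_self_of_ergodic [T2Space X] [IsProbabilityMeasure m]
    [m.IsOpenPosMeasure] [IsProbabilityMeasure ν] [ν.Regular] {T₀ : X → X} {f : X → G}
    (herg : Ergodic (skewProduct T₀ f) (fiberAverage m ν)) (hν : ν.map (skewProduct T₀ f) = ν)
    (w : G) : ν.map (rotateFiber w) = ν := by
  have hR := continuous_rotateFiber (X := X) w
  have := Measure.Regular.map_of_continuous (μ := ν) hR
  refine Measure.ext_of_integral_eq_on_compactlySupported fun g => ?_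
  have hg : Continuous g := map_continuous g
  rw [integral_map hR.aemeasurable hg.aestronglyMeasurable,
    integral_comp_rotateFiber_eq_integral_fiberAverage herg hν hg,
    ← integral_comp_rotateFiber_eq_integral_fiberAverage herg hν hg 1]
  simp [rotateFiber]

end Topological

theorem stmt5_general {X₀ : Type*} [TopologicalSpace X₀] [CompactSpace X₀] [T2Space X₀]
    [MeasurableSpace X₀] [BorelSpace X₀]
    (T₀ : X₀ ≃ₜ X₀) (μ₀ : Measure X₀)
    (huniq : ∀ ν : Measure X₀, IsProbabilityMeasure ν → ν.Regular →
      Measure.map T₀ ν = ν → ν = μ₀)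
    (f : X₀ → Circle)
    (herg : Ergodic (fun p : X₀ × Circle => (T₀ p.1, f p.1 * p.2)) (μ₀.prod haarCircle)) :
    ∀ ν : Measure (X₀ × Circle), IsProbabilityMeasure ν → ν.Regular →
      Measure.map (fun p : X₀ × Circle => (T₀ p.1, f p.1 * p.2)) ν = ν →
      ν = μ₀.prod haarCircle := by
  intro ν _ _ hν
  have hmarg : ν.map Prod.fst = μ₀ :=
    huniq _ (Measure.isProbabilityMeasure_map measurable_fst.aemeasurable)
      (Measure.Regular.map_of_continuous continuous_fst)
      (map_map_fst_eq_of_map_skewProduct_eq T₀.measurable herg.measurable hν)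
  have havg : fiberAverage haarCircle ν = μ₀.prod haarCircle := by
    rw [fiberAverage_eq_prod, hmarg]
  rw [← havg, fiberAverage_eq_self (map_rotateFiber_eq_self_of_ergodic (havg ▸ herg) hν)]

/-- For a uniquely ergodic base `(X₀, T₀, μ₀)` and continuous `f : X₀ → 𝕋`, if the skew product
`T(x,z) = (T₀ x, f(x) z)` is ergodic with respect to `μ = μ₀ × m`, then it is uniquely ergodic:
`μ` is the only `T`-invariant Radon probability measure. -/
theorem stmt5 {X₀ : Type*} [TopologicalSpace X₀] [CompactSpace X₀] [T2Space X₀] [Nonempty X₀]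
    [MeasurableSpace X₀] [BorelSpace X₀]
    (T₀ : X₀ ≃ₜ X₀) (μ₀ : Measure X₀) [IsProbabilityMeasure μ₀] [μ₀.Regular]
    (hμ₀ : Measure.map T₀ μ₀ = μ₀)
    (huniq : ∀ ν : Measure X₀, IsProbabilityMeasure ν → ν.Regular →
      Measure.map T₀ ν = ν → ν = μ₀)
    (f : X₀ → Circle) (hf : Continuous f)
    (herg : Ergodic (fun p : X₀ × Circle => (T₀ p.1, f p.1 * p.2)) (μ₀.prod haarCircle)) :
    ∀ ν : Measure (X₀ × Circle), IsProbabilityMeasure ν → ν.Regular →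
      Measure.map (fun p : X₀ × Circle => (T₀ p.1, f p.1 * p.2)) ν = ν →
      ν = μ₀.prod haarCircle :=
  stmt5_general T₀ μ₀ huniq f herg
end

section
/- Let (X, T) be a uniquely ergodic classical dynamical system with unique invariant measure μ. Let λ ∈ ℂ with |λ| = 1 and let u : X → ℂ be continuous with |u(x)| = 1 for all x ∈ X and u(T x) = λ·u(x) for all x ∈ X. Then for every continuous a : X → ℂ, the Cesaro means (1/n)·∑_{k=0}^{n−1} λ^{−k}·a(T^k x) converge, uniformly in x ∈ X as n → ∞, to (∫_X conj(u)·a dμ)·u(x). -/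
/-!
Since `u (T^[k] x) = λ^k u x` and `|u| = 1`, the weighted mean equals `u x` times the ordinary
Birkhoff average of `b = conj u * a`, so it suffices that Birkhoff averages of continuous functions
converge uniformly to their `μ`-integral (Oxtoby). If they did not, there would be points `xₙ`,
for infinitely many `n`, at which the `n`-th average stays `ε` away from `∫ b dμ`. Limits along an
ultrafilter of the averages based at `xₙ` form a positive, normalised, `T`-invariant functional on
`C(X, ℝ)`; its Riesz measure is a regular invariant probability measure, hence equals `μ`, and
integrating `b` against it contradicts the choice of the `xₙ`.
-/

open MeasureTheory Filter
open Topology CompactlySupported ComplexConjugate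

theorem norm_birkhoffAverage_le {α E : Type*} (𝕜 : Type*) [RCLike 𝕜] [NormedAddCommGroup E]
    [NormedSpace 𝕜 E] (f : α → α) {g : α → E} {C : ℝ} (hC : ∀ x, ‖g x‖ ≤ C) (n : ℕ) (x : α) :
    ‖birkhoffAverage 𝕜 f g n x‖ ≤ C := by
  rcases n.eq_zero_or_pos with rfl | hn
  · simpa using (norm_nonneg _).trans (hC x)
  · have hsum : ‖birkhoffSum f g n x‖ ≤ n * C := by
      simpa [birkhoffSum] using norm_sum_le_of_le (Finset.range n) fun k _ => hC (f^[k] x)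
    rw [birkhoffAverage, norm_smul, norm_inv, RCLike.norm_natCast,
      inv_mul_le_iff₀ (by exact_mod_cast hn)]
    exact hsum

theorem birkhoffAverage_mono {α : Type*} (f : α → α) {g g' : α → ℝ} (h : g ≤ g') (n : ℕ)
    (x : α) : birkhoffAverage ℝ f g n x ≤ birkhoffAverage ℝ f g' n x := by
  simp only [birkhoffAverage, birkhoffSum, smul_eq_mul]
  gcongr
  exact h _

theorem birkhoffAverage_smul {α : Type*} (f : α → α) (c : ℝ) (g : α → ℝ) (n : ℕ) (x : α) :
    birkhoffAverage ℝ f (c • g) n x = c * birkhoffAverage ℝ f g n x := by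
  simp only [birkhoffAverage, birkhoffSum, Pi.smul_apply, smul_eq_mul, ← Finset.mul_sum]
  ring

theorem birkhoffAverage_comp_apply {α M : Type*} (R : Type*) [DivisionSemiring R]
    [AddCommMonoid M] [Module R M] (f : α → α) (g : α → M) (n : ℕ) (x : α) :
    birkhoffAverage R f (g ∘ f) n x = birkhoffAverage R f g n (f x) := by
  simp only [birkhoffAverage, birkhoffSum, Function.comp_apply,
    ← Function.iterate_succ_apply' f, Function.iterate_succ_apply]

namespace BirkhoffLimit

variable {X : Type*} [TopologicalSpace X] [CompactSpace X]
  (T : X → X) (U : Ultrafilter ℕ) (xs : ℕ → X)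

/-- The Krylov–Bogolyubov construction, with a limit along an ultrafilter in place of a weak-*
limit of empirical measures. -/
noncomputable def lim (f : X → ℝ) : ℝ :=
  limUnder (U : Filter ℕ) fun n => birkhoffAverage ℝ T f n (xs n)

theorem tendsto_lim {f : X → ℝ} (hf : Continuous f) :
    Tendsto (fun n => birkhoffAverage ℝ T f n (xs n)) (U : Filter ℕ) (𝓝 (lim T U xs f)) := by
  obtain ⟨C, hC⟩ := (isCompact_range hf).isBounded.exists_norm_le
  have hmem : ∀ n, birkhoffAverage ℝ T f n (xs n) ∈ Metric.closedBall 0 C := fun n => by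
    simpa using norm_birkhoffAverage_le ℝ T (fun x => hC _ ⟨x, rfl⟩) n (xs n)
  obtain ⟨L, -, hL⟩ := (isCompact_closedBall (0 : ℝ) C).ultrafilter_le_nhds'
    (U.map fun n => birkhoffAverage ℝ T f n (xs n)) (Ultrafilter.mem_map.2 (univ_mem' hmem))
  exact tendsto_nhds_limUnder ⟨L, hL⟩

noncomputable def functional : C_c(X, ℝ) →ₚ[ℝ] ℝ where
  toFun f := lim T U xs f
  map_add' f g := tendsto_nhds_unique (tendsto_lim T U xs (f + g).continuous) <| by
    simpa [birkhoffAverage_add] using (tendsto_lim T U xs f.continuous).add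
      (tendsto_lim T U xs g.continuous)
  map_smul' c f := tendsto_nhds_unique (tendsto_lim T U xs (c • f).continuous) <| by
    simpa [birkhoffAverage_smul] using (tendsto_lim T U xs f.continuous).const_mul c
  monotone' f g h := le_of_tendsto_of_tendsto' (tendsto_lim T U xs f.continuous)
    (tendsto_lim T U xs g.continuous) fun n => birkhoffAverage_mono T h n (xs n)

theorem lim_one (hU : (U : Filter ℕ) ≤ atTop) : lim T U xs (fun _ => 1) = 1 := by
  refine tendsto_nhds_unique (tendsto_lim T U xs continuous_const) (tendsto_const_nhds.congr' ?_)
  filter_upwards [hU (eventually_ne_atTop 0)] with n hn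
  rw [birkhoffAverage_of_comp_eq ℝ (f := T) (g := fun _ => 1) rfl (by exact_mod_cast hn)]

theorem lim_comp {f : X → ℝ} (hf : Continuous f) (hT : Continuous T)
    (hU : (U : Filter ℕ) ≤ atTop) : lim T U xs (f ∘ T) = lim T U xs f := by
  obtain ⟨C, hC⟩ := (isCompact_range hf).isBounded.exists_norm_le
  have hsmall : Tendsto (fun n : ℕ => birkhoffAverage ℝ T (f ∘ T) n (xs n)
      - birkhoffAverage ℝ T f n (xs n)) (U : Filter ℕ) (𝓝 0) := by
    refine squeeze_zero_norm (a := fun n : ℕ => 2 * C / n) (fun n => ?_) ?_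
    · rw [← dist_eq_norm, birkhoffAverage_comp_apply, dist_birkhoffAverage_apply_birkhoffAverage]
      gcongr
      exact (dist_le_norm_add_norm _ _).trans
        (by linarith [hC _ ⟨T^[n] (xs n), rfl⟩, hC _ ⟨xs n, rfl⟩])
    · exact (tendsto_const_nhds.div_atTop tendsto_natCast_atTop_atTop).mono_left hU
  refine tendsto_nhds_unique (tendsto_lim T U xs (hf.comp hT)) ?_
  simpa using (tendsto_lim T U xs hf).add hsmall

variable [T2Space X] [MeasurableSpace X] [BorelSpace X]

noncomputable def measure : Measure X := RealRMK.rieszMeasure (functional T U xs)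

instance : (measure T U xs).Regular := RealRMK.regular_rieszMeasure _

theorem integral_measure {f : X → ℝ} (hf : Continuous f) :
    ∫ x, f x ∂measure T U xs = lim T U xs f :=
  RealRMK.integral_rieszMeasure (functional T U xs)
    ⟨⟨f, hf⟩, HasCompactSupport.of_compactSpace f⟩

theorem isProbabilityMeasure_measure (hU : (U : Filter ℕ) ≤ atTop) :
    IsProbabilityMeasure (measure T U xs) := by
  constructor
  have h := integral_measure T U xs (f := fun _ => 1) continuous_const
  rw [lim_one T U xs hU, integral_const, smul_eq_mul, mul_one] at h
  rw [← ENNReal.ofReal_toReal (measure_ne_top _ _), ← measureReal_def, h, ENNReal.ofReal_one]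

theorem map_measure (hT : Continuous T) (hU : (U : Filter ℕ) ≤ atTop) :
    (measure T U xs).map T = measure T U xs := by
  have := isProbabilityMeasure_measure T U xs hU
  -- a finite inner regular measure on a compact Hausdorff space is regular
  have : IsProbabilityMeasure ((measure T U xs).map T) :=
    Measure.isProbabilityMeasure_map hT.aemeasurable
  have : ((measure T U xs).map T).InnerRegular := Measure.InnerRegular.map_of_continuous hT
  refine Measure.ext_of_integral_eq_on_compactlySupported fun f => ?_
  rw [integral_map hT.aemeasurable (map_continuous f).aestronglyMeasurable]
  exact (integral_measure T U xs (f.continuous.comp hT)).trans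
    ((lim_comp T U xs f.continuous hT hU).trans (integral_measure T U xs f.continuous).symm)

end BirkhoffLimit

section UniqueInvariant

variable {X : Type*} [TopologicalSpace X] [CompactSpace X] [T2Space X] [MeasurableSpace X]
  [BorelSpace X] {T : X → X} {μ : Measure X}

theorem tendstoUniformly_birkhoffAverage_of_unique_invariant (hT : Continuous T)
    (huniq : ∀ ν : Measure X, IsProbabilityMeasure ν → ν.Regular → Measure.map T ν = ν → ν = μ)
    {g : X → ℝ} (hg : Continuous g) :
    TendstoUniformly (birkhoffAverage ℝ T g) (fun _ => ∫ x, g x ∂μ) atTop := by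
  by_contra hfail
  obtain ⟨ε, hε, hfreq⟩ : ∃ ε > 0, ∃ᶠ n in atTop,
      ∃ x, ε ≤ dist (∫ x, g x ∂μ) (birkhoffAverage ℝ T g n x) := by
    rw [Metric.tendstoUniformly_iff] at hfail
    push Not at hfail
    simpa only [not_eventually, not_forall, not_lt] using hfail
  obtain ⟨U, hU⟩ := exists_ultrafilter_iff.2 (frequently_iff_neBot.1 hfreq)
  have : Nonempty X := let ⟨_, x, _⟩ := hfreq.exists; ⟨x⟩
  choose! xs hxs using fun n (hn : ∃ x, ε ≤ dist (∫ x, g x ∂μ) (birkhoffAverage ℝ T g n x)) => hn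
  have hUatTop : (U : Filter ℕ) ≤ atTop := hU.trans inf_le_left
  have hμ : μ = BirkhoffLimit.measure T U xs :=
    (huniq _ (BirkhoffLimit.isProbabilityMeasure_measure T U xs hUatTop) inferInstance
      (BirkhoffLimit.map_measure T U xs hT hUatTop)).symm
  have hlim := BirkhoffLimit.tendsto_lim T U xs hg
  rw [← BirkhoffLimit.integral_measure T U xs hg, ← hμ] at hlim
  have : ε ≤ dist (∫ x, g x ∂μ) (∫ x, g x ∂μ) :=
    ge_of_tendsto (tendsto_const_nhds.dist hlim)
      (Filter.mem_of_superset (le_principal_iff.1 (hU.trans inf_le_right)) hxs)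
  rw [dist_self] at this
  linarith

theorem tendstoUniformly_birkhoffAverage_complex_of_unique_invariant [IsFiniteMeasure μ]
    (hT : Continuous T)
    (huniq : ∀ ν : Measure X, IsProbabilityMeasure ν → ν.Regular → Measure.map T ν = ν → ν = μ)
    {g : X → ℂ} (hg : Continuous g) :
    TendstoUniformly (birkhoffAverage ℂ T g) (fun _ => ∫ x, g x ∂μ) atTop := by
  have hre := tendstoUniformly_birkhoffAverage_of_unique_invariant hT huniq
    (Complex.continuous_re.comp hg)
  have him := tendstoUniformly_birkhoffAverage_of_unique_invariant hT huniq
    (Complex.continuous_im.comp hg)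
  rw [← tendsto_prod_top_iff] at hre him ⊢
  have hint : Integrable g μ := hg.integrable_of_hasCompactSupport (.of_compactSpace g)
  convert (Complex.equivRealProdCLM.symm.continuous.tendsto _).comp (hre.prodMk_nhds him) using 1
  · ext ⟨n, x⟩
    apply Complex.ext
    · exact map_birkhoffAverage ℂ ℝ Complex.reLm T g n x
    · exact map_birkhoffAverage ℂ ℝ Complex.imLm T g n x
  · apply congrArg
    apply Complex.ext
    · exact (integral_re hint).symm
    · exact (integral_im hint).symm

end UniqueInvariant

theorem apply_iterate_eq_pow_mul {α M : Type*} [Monoid M] {T : α → α} {u : α → M} {c : M}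
    (heig : ∀ x, u (T x) = c * u x) (k : ℕ) (x : α) : u (T^[k] x) = c ^ k * u x := by
  simpa [mul_left_iterate] using (Function.Semiconj.iterate_right (gb := (c * ·)) heig k) x

theorem inv_mul_sum_eq_birkhoffAverage_mul {X : Type*} {T : X → X} {lam : ℂ} (hlam : ‖lam‖ = 1)
    {u : X → ℂ} (humod : ∀ x, ‖u x‖ = 1) (heig : ∀ x, u (T x) = lam * u x) (a : X → ℂ)
    (n : ℕ) (x : X) :
    (n : ℂ)⁻¹ * ∑ k ∈ Finset.range n, lam ^ (-(k : ℤ)) * a (T^[k] x) =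
      birkhoffAverage ℂ T (fun y => conj (u y) * a y) n x * u x := by
  have hterm (k : ℕ) :
      lam ^ (-(k : ℤ)) * a (T^[k] x) = conj (u (T^[k] x)) * a (T^[k] x) * u x := by
    rw [apply_iterate_eq_pow_mul heig, map_mul, map_pow, ← Complex.inv_eq_conj hlam,
      mul_right_comm _ (a _), mul_assoc _ (conj (u x)), Complex.conj_mul', humod,
      zpow_neg, zpow_natCast, inv_pow]
    simp
  simp only [birkhoffAverage, birkhoffSum, smul_eq_mul, hterm, Finset.sum_mul, mul_assoc]

theorem stmt6_general {X : Type*} [TopologicalSpace X] [CompactSpace X] [T2Space X]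
    [MeasurableSpace X] [BorelSpace X]
    (T : X → X) (hT : Continuous T)
    (μ : Measure X) [IsProbabilityMeasure μ]
    (huniq : ∀ ν : Measure X, IsProbabilityMeasure ν → ν.Regular →
      Measure.map T ν = ν → ν = μ)
    (lam : ℂ) (hlam : ‖lam‖ = 1)
    (u : X → ℂ) (hu : Continuous u) (humod : ∀ x, ‖u x‖ = 1)
    (heig : ∀ x, u (T x) = lam * u x)
    (a : X → ℂ) (ha : Continuous a) :
    TendstoUniformly
      (fun (n : ℕ) (x : X) => (n : ℂ)⁻¹ * ∑ k ∈ Finset.range n, lam ^ (-(k : ℤ)) * a (T^[k] x))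
      (fun x => (∫ y, (starRingEnd ℂ) (u y) * a y ∂μ) * u x) atTop := by
  have hb : Continuous fun y => conj (u y) * a y := (Complex.continuous_conj.comp hu).mul ha
  have hconv := tendstoUniformly_birkhoffAverage_complex_of_unique_invariant hT huniq hb
  rw [Metric.tendstoUniformly_iff] at hconv ⊢
  intro ε hε
  filter_upwards [hconv ε hε] with n hn x
  rw [inv_mul_sum_eq_birkhoffAverage_mul hlam humod heig, dist_eq_norm, ← sub_mul, norm_mul, humod,
    mul_one, ← dist_eq_norm]
  exact hn x

/-- For a uniquely ergodic system `(X, T, μ)`, a unimodular `λ` and a continuous unimodular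
eigenfunction `u` with `u∘T = λ u`, the weighted Cesaro means of any continuous `a` converge
uniformly to `(∫ conj(u)·a dμ)·u`. -/
theorem stmt6 {X : Type*} [TopologicalSpace X] [CompactSpace X] [T2Space X] [Nonempty X]
    [MeasurableSpace X] [BorelSpace X]
    (T : X → X) (hT : Continuous T)
    (μ : Measure X) [IsProbabilityMeasure μ] [μ.Regular] (hμ : Measure.map T μ = μ)
    (huniq : ∀ ν : Measure X, IsProbabilityMeasure ν → ν.Regular →
      Measure.map T ν = ν → ν = μ)
    (lam : ℂ) (hlam : ‖lam‖ = 1)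
    (u : X → ℂ) (hu : Continuous u) (humod : ∀ x, ‖u x‖ = 1)
    (heig : ∀ x, u (T x) = lam * u x)
    (a : X → ℂ) (ha : Continuous a) :
    TendstoUniformly
      (fun (n : ℕ) (x : X) => (n : ℂ)⁻¹ * ∑ k ∈ Finset.range n, lam ^ (-(k : ℤ)) * a (T^[k] x))
      (fun x => (∫ y, (starRingEnd ℂ) (u y) * a y ∂μ) * u x) atTop :=
  stmt6_general T hT μ huniq lam hlam u hu humod heig a ha
end

section
/- Let θ ∈ ℝ with θ/(2π) irrational and let f : 𝕋 → 𝕋 be continuous. Define T : 𝕋 × 𝕋 → 𝕋 × 𝕋 by T(z, w) = (e^{iθ}·z, f(z)·w). Then every continuous F : 𝕋 × 𝕋 → ℂ with F∘T = F is constant if and only if, for every nonzero integer n, the only continuous g : 𝕋 → ℂ satisfying g(e^{iθ}·z)·f(z)ⁿ = g(z) for all z ∈ 𝕋 is the zero function. -/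
/-!
Expand a continuous `F` on `𝕋 × 𝕋` in the fibre variable: `gₙ(z) = ∫ F(z, w) w⁻ⁿ dw`.
Each `gₙ` is continuous, and invariance of `F` under the skew product turns into the cohomological
equation `gₙ(e^{iθ} z) f(z)ⁿ = gₙ(z)`. So if that equation has only the zero solution for `n ≠ 0`,
all fibres of `F` are constant, equal to `g₀(z)`, and `g₀` is invariant under the irrational
rotation, hence constant. Conversely a solution `g` for some `n ≠ 0` gives the invariant function
`g(z) wⁿ`; if it is constant, evaluating at `w = 1` and at an `n`-th root of `-1` gives `g = 0`.
-/

open MeasureTheory AddCircle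

namespace AddCircle

variable {T : ℝ} [Fact (0 < T)]

theorem eq_of_fourierCoeff_eq {f g : C(AddCircle T, ℂ)} (h : fourierCoeff f = fourierCoeff g) :
    f = g := by
  refine ContinuousMap.toLp_injective (p := 2) (𝕜 := ℂ) haarAddCircle
    (fourierBasis.repr.injective (lp.ext <| funext fun n => ?_))
  simp only [fourierBasis_repr, fourierCoeff_toLp, h]

theorem fourierCoeff_const (c : ℂ) : fourierCoeff (fun _ : AddCircle T => c) = Pi.single 0 c := by
  have : (fun _ : AddCircle T => c) = fun x => c * fourier 0 x := by simp
  ext n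
  rw [this, fourierCoeff.const_mul, fourierCoeff_fourier]
  by_cases hn : n = 0 <;> simp [hn]

theorem fourierCoeff_comp_add_right {E : Type*} [NormedAddCommGroup E] [NormedSpace ℂ E]
    (h : AddCircle T → E) (a : AddCircle T) (n : ℤ) :
    fourierCoeff (fun x => h (x + a)) n = fourier n a • fourierCoeff h n := by
  have hshift (t : AddCircle T) : fourier (-n) (t - a) = fourier n a * fourier (-n) t := by
    rw [fourier_apply, fourier_apply, fourier_apply, ← Circle.coe_mul, ← toCircle_add, smul_sub,
      neg_smul, neg_smul, sub_neg_eq_add, add_comm]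
  calc fourierCoeff (fun x => h (x + a)) n
      = ∫ t, fourier (-n) (t - a) • h t ∂haarAddCircle := by
        rw [fourierCoeff, ← integral_add_right_eq_self (μ := haarAddCircle)
          (fun t => fourier (-n) (t - a) • h t) a]
        simp only [add_sub_cancel_right]
    _ = fourier n a • fourierCoeff h n := by
        simp only [hshift, mul_smul, integral_smul, fourierCoeff]

theorem continuous_fourierCoeff {X : Type*} [TopologicalSpace X] [FirstCountableTopology X]
    [LocallyCompactSpace X] {F : X → AddCircle T → ℂ} (hF : Continuous (Function.uncurry F))
    (n : ℤ) : Continuous fun x => fourierCoeff (F x) n := by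
  have := continuous_parametric_integral_of_continuous (μ := haarAddCircle)
    (f := fun x t => fourier (-n) t • F x t) (by fun_prop) isCompact_univ
  rw [Measure.restrict_univ] at this
  exact this

theorem fourierCoeff_comp_mul_toCircle (φ : Circle → ℂ) (w : Circle) (n : ℤ) :
    fourierCoeff (fun y : AddCircle T => φ (w * toCircle y)) n =
      (w : ℂ) ^ n * fourierCoeff (fun y : AddCircle T => φ (toCircle y)) n := by
  obtain ⟨a, rfl⟩ := (homeomorphCircle (Fact.out : 0 < T).ne').surjective w
  have hadd (y : AddCircle T) : toCircle a * toCircle y = toCircle (y + a) := by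
    rw [toCircle_add, mul_comm]
  simp only [homeomorphCircle_apply, hadd]
  rw [fourierCoeff_comp_add_right (fun y => φ (toCircle y)), fourier_apply, toCircle_zsmul,
    Circle.coe_zpow, smul_eq_mul]

end AddCircle

theorem Circle.denseRange_zpow_exp {θ : ℝ} (hθ : Irrational (θ / (2 * Real.pi))) :
    DenseRange (Circle.exp θ ^ · : ℤ → Circle) := by
  have h := homeomorphCircle'.surjective.denseRange.comp (denseRange_zsmul_coe_iff.mpr hθ)
    homeomorphCircle'.continuous
  convert h using 2 with n
  rw [Function.comp_apply, ← AddCircle.coe_zsmul, homeomorphCircle'_apply_mk, Circle.exp_zsmul]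

theorem Circle.exists_coe_zpow_eq_neg_one {n : ℤ} (hn : n ≠ 0) :
    ∃ ζ : Circle, (ζ : ℂ) ^ n = -1 := by
  refine ⟨Circle.exp (Real.pi / n), ?_⟩
  rw [← Circle.coe_zpow, ← Circle.exp_zsmul, zsmul_eq_mul, mul_div_cancel₀ _ (by exact_mod_cast hn),
    Circle.coe_exp, Complex.exp_pi_mul_I]

theorem apply_eq_apply_one_of_forall_mul_left {G X : Type*} [Group G] [TopologicalSpace G]
    [TopologicalSpace X] [T2Space X] {α : G} (hα : DenseRange (α ^ · : ℤ → G)) {g : G → X}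
    (hg : Continuous g) (hgα : ∀ z, g (α * z) = g z) (z : G) : g z = g 1 := by
  have hzpow (n : ℤ) : g (α ^ n) = g 1 := by
    induction n using Int.induction_on with
    | zero => rw [zpow_zero]
    | succ k ih => rw [add_comm, zpow_one_add, hgα, ih]
    | pred k ih => rw [← ih, ← hgα, ← zpow_one_add, add_sub_cancel]
  exact hα.induction_on z (isClosed_eq hg continuous_const) hzpow

section FiberCoeff

variable {X : Type*}

noncomputable def fiberCoeff (F : X × Circle → ℂ) (n : ℤ) (x : X) : ℂ :=
  fourierCoeff (fun y : AddCircle (1 : ℝ) => F (x, toCircle y)) n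

theorem continuous_fiberCoeff [TopologicalSpace X] [FirstCountableTopology X]
    [LocallyCompactSpace X] {F : X × Circle → ℂ} (hF : Continuous F) (n : ℤ) :
    Continuous (fiberCoeff F n) :=
  continuous_fourierCoeff (F := fun x y => F (x, toCircle y)) (by fun_prop) n

theorem apply_eq_of_fiberCoeff_eq_single [TopologicalSpace X] {F : X × Circle → ℂ}
    (hF : Continuous F) {x : X} {c : ℂ} (h : ∀ n, fiberCoeff F n x = (Pi.single 0 c : ℤ → ℂ) n)
    (w : Circle) : F (x, w) = c := by
  let Fx : C(AddCircle (1 : ℝ), ℂ) := ⟨fun y => F (x, toCircle y), by fun_prop⟩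
  have hFx : Fx = ContinuousMap.const _ c :=
    eq_of_fourierCoeff_eq (funext fun n => (h n).trans (congrFun (fourierCoeff_const c) n).symm)
  obtain ⟨y, rfl⟩ := (homeomorphCircle one_ne_zero).surjective w
  rw [homeomorphCircle_apply]
  exact DFunLike.congr_fun hFx y

theorem fiberCoeff_mul_zpow_eq_of_invariant {α : Circle} {f : Circle → Circle}
    {F : Circle × Circle → ℂ} (hF : ∀ p : Circle × Circle, F (α * p.1, f p.1 * p.2) = F p)
    (n : ℤ) (z : Circle) : fiberCoeff F n (α * z) * (f z : ℂ) ^ n = fiberCoeff F n z := by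
  have := fourierCoeff_comp_mul_toCircle (T := 1) (fun w => F (α * z, w)) (f z) n
  simp only [hF (z, _)] at this
  rw [fiberCoeff, fiberCoeff, this, mul_comm]

end FiberCoeff

theorem eq_zero_of_forall_invariant_eq_const {α : Circle} {f : Circle → Circle}
    (hconst : ∀ F : Circle × Circle → ℂ, Continuous F →
      (∀ p : Circle × Circle, F (α * p.1, f p.1 * p.2) = F p) → ∃ c : ℂ, ∀ p, F p = c)
    {n : ℤ} (hn : n ≠ 0) {g : Circle → ℂ} (hg : Continuous g)
    (hgf : ∀ z, g (α * z) * (f z : ℂ) ^ n = g z) (z : Circle) : g z = 0 := by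
  obtain ⟨c, hc⟩ := hconst (fun p => g p.1 * (p.2 : ℂ) ^ n) (by fun_prop (disch := simp))
    (fun p => by simp only [Circle.coe_mul, mul_zpow, ← mul_assoc, hgf])
  obtain ⟨ζ, hζ⟩ := Circle.exists_coe_zpow_eq_neg_one hn
  have h₁ := hc (z, 1)
  have h₂ := hc (z, ζ)
  simp only [Circle.coe_one, one_zpow, mul_one, hζ] at h₁ h₂
  linear_combination (h₁ - h₂) / 2

theorem exists_forall_eq_of_invariant {α : Circle} (hα : DenseRange (α ^ · : ℤ → Circle))
    {f : Circle → Circle}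
    (htriv : ∀ n : ℤ, n ≠ 0 → ∀ g : Circle → ℂ, Continuous g →
      (∀ z : Circle, g (α * z) * (f z : ℂ) ^ n = g z) → ∀ z, g z = 0)
    {F : Circle × Circle → ℂ} (hF : Continuous F)
    (hFα : ∀ p : Circle × Circle, F (α * p.1, f p.1 * p.2) = F p) :
    ∃ c : ℂ, ∀ p, F p = c := by
  have hcoh := fiberCoeff_mul_zpow_eq_of_invariant hFα
  have hzero (n : ℤ) (hn : n ≠ 0) : ∀ z, fiberCoeff F n z = 0 :=
    htriv n hn _ (continuous_fiberCoeff hF n) (hcoh n)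
  have hconst : ∀ z, fiberCoeff F 0 z = fiberCoeff F 0 1 :=
    apply_eq_apply_one_of_forall_mul_left hα (continuous_fiberCoeff hF 0)
      fun z => by simpa using hcoh 0 z
  refine ⟨fiberCoeff F 0 1, fun ⟨z, w⟩ => apply_eq_of_fiberCoeff_eq_single hF (fun n => ?_) w⟩
  rcases eq_or_ne n 0 with rfl | hn
  · simp [hconst z]
  · simp [hzero n hn z, hn]

theorem stmt13_general (θ : ℝ) (hθ : Irrational (θ / (2 * Real.pi)))
    (f : Circle → Circle) :
    (∀ F : Circle × Circle → ℂ, Continuous F →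
        (∀ p : Circle × Circle, F (Circle.exp θ * p.1, f p.1 * p.2) = F p) →
        ∃ c : ℂ, ∀ p, F p = c) ↔
      (∀ n : ℤ, n ≠ 0 → ∀ g : Circle → ℂ, Continuous g →
        (∀ z : Circle, g (Circle.exp θ * z) * (f z : ℂ) ^ n = g z) → ∀ z, g z = 0) :=
  ⟨fun hconst _ hn _ hg hgf => eq_zero_of_forall_invariant_eq_const hconst hn hg hgf,
    fun htriv _ hF hFα => exists_forall_eq_of_invariant (Circle.denseRange_zpow_exp hθ) htriv hF hFα⟩

/-- For θ with θ/(2π) irrational and continuous `f : 𝕋 → 𝕋`, the classical Anzai skew-product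
`T(z,w) = (e^{iθ}z, f(z)w)` on `𝕋 × 𝕋` has only constant continuous invariant functions if and
only if for every nonzero integer `n` the cohomological equation `g(e^{iθ}z)·f(z)ⁿ = g(z)` has
no nonzero continuous solution. -/
theorem stmt13 (θ : ℝ) (hθ : Irrational (θ / (2 * Real.pi)))
    (f : Circle → Circle) (hf : Continuous f) :
    (∀ F : Circle × Circle → ℂ, Continuous F →
        (∀ p : Circle × Circle, F (Circle.exp θ * p.1, f p.1 * p.2) = F p) →
        ∃ c : ℂ, ∀ p, F p = c) ↔
      (∀ n : ℤ, n ≠ 0 → ∀ g : Circle → ℂ, Continuous g →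
        (∀ z : Circle, g (Circle.exp θ * z) * (f z : ℂ) ^ n = g z) → ∀ z, g z = 0) :=
  stmt13_general θ hθ f
end
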